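/- arXiv:2110.02487 — 2 statements merged into one kernel-verified Lean document; each statement's English description precedes it below -/
import Mathlib

section
/- For even k, in the worst-case example graph G, the map i ↦ b_{i+j} (indices mod k+1) defines for each j ∈ {1,...,k} a perfect matching M_j of G given by M_j = ({{a_i, b_{i+j}} : i ∈ {1,...,k+1}} \ {{a_j, b_{2j}}}) ∪ {{a_j, w}, {b_{2j}, u}}, and the matchings M_1, ..., M_k are pairwise disjoint. -/
open scoped Classical

/-- A matching of `G`, given as a finite set of edges of `G` that are pairwise vertex-disjoint. -/
def IsMatchingE {V : Type*} (G : SimpleGraph V) (M : Finset (Sym2 V)) : Prop :=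
  ↑M ⊆ G.edgeSet ∧ (M : Set (Sym2 V)).Pairwise fun e f => ∀ v, v ∈ e → v ∉ f

/-- A maximum-cardinality matching of `G`. -/
def IsMaxMatchingE {V : Type*} (G : SimpleGraph V) (M : Finset (Sym2 V)) : Prop :=
  IsMatchingE G M ∧ ∀ M', IsMatchingE G M' → M'.card ≤ M.card

/-- An independent set of `G`. -/
def IsIndepF {V : Type*} (G : SimpleGraph V) (S : Finset V) : Prop :=
  ∀ v ∈ S, ∀ w ∈ S, ¬G.Adj v w

/-- A maximum-cardinality independent set of `G`. -/
def IsMaxIndepF {V : Type*} (G : SimpleGraph V) (S : Finset V) : Prop :=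
  IsIndepF G S ∧ ∀ S', IsIndepF G S' → S'.card ≤ S.card

/-- A `k`-dependent set: every vertex of the induced subgraph `G[S]` has degree at most `k`. -/
def KDepSet {V : Type*} (G : SimpleGraph V) (k : ℕ) (S : Finset V) : Prop :=
  ∀ v ∈ S, (S.filter fun w => G.Adj v w).card ≤ k

/-- The residual graph after deleting the matchings `M 0, ..., M (i-1)` from `G`. -/
def resid {V : Type*} (G : SimpleGraph V) (M : ℕ → Finset (Sym2 V)) (i : ℕ) : SimpleGraph V :=
  G.deleteEdges (⋃ j ∈ Set.Iio i, (M j : Set (Sym2 V)))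

/-- The vertex set of the worst-case example graph: `A ∪ {u}` on the left, `B ∪ {w}` on the right. -/
abbrev ExV (k : ℕ) := (Fin (k+1) ⊕ Unit) ⊕ (Fin (k+1) ⊕ Unit)

/-- The base relation of the worst-case example graph: `u ~ w`, `aᵢ ~ bⱼ` for `i ≠ j`,
`aᵢ ~ w` and `u ~ bⱼ` for all `i, j`. -/
def exRel (k : ℕ) : ExV k → ExV k → Prop
  | Sum.inl x, Sum.inr y =>
    match x, y with
    | Sum.inl i, Sum.inl j => i ≠ j
    | _, _ => True
  | _, _ => False

/-- The worst-case example bipartite graph. -/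
def exGraph (k : ℕ) : SimpleGraph (ExV k) := SimpleGraph.fromRel (exRel k)

open Fin.NatCast in
/-- The vertex `aᵢ` (index taken modulo `k+1`). -/
def aV (k : ℕ) (i : ℕ) : ExV k := Sum.inl (Sum.inl (i : Fin (k+1)))
open Fin.NatCast in
/-- The vertex `bᵢ` (index taken modulo `k+1`). -/
def bV (k : ℕ) (i : ℕ) : ExV k := Sum.inr (Sum.inl (i : Fin (k+1)))
/-- The vertex `u`. -/
def uV (k : ℕ) : ExV k := Sum.inl (Sum.inr ())
/-- The vertex `w`. -/
def wV (k : ℕ) : ExV k := Sum.inr (Sum.inr ())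

/-- The vertex set `A ∪ B`. -/
def ABset (k : ℕ) : Finset (ExV k) :=
  (Finset.univ.image fun i : Fin (k+1) => (Sum.inl (Sum.inl i) : ExV k)) ∪
  (Finset.univ.image fun i : Fin (k+1) => (Sum.inr (Sum.inl i) : ExV k))

/-- The matching `M_j = ({{aᵢ, b_{i+j}} : i ∈ {1,...,k+1}} \ {{a_j, b_{2j}}}) ∪ {{a_j,w},{b_{2j},u}}`,
indices of `b` taken modulo `k+1`. -/
def Mj (k j : ℕ) : Finset (Sym2 (ExV k)) :=
  (((Finset.range (k+1)).image fun i => s(aV k (i+1), bV k (i+1+j))) \ {s(aV k j, bV k (2*j))})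
    ∪ {s(aV k j, wV k), s(bV k (2*j), uV k)}

/-!
The matching `M_j` is the set of pairs `{v, σ v}` of the fixed-point-free involution `σ` of the
vertex set that swaps `aᵢ ↔ b_{i+j}` for `i ≠ j`, `a_j ↔ w` and `b_{2j} ↔ u`. The pairs of any
such involution form a perfect matching as soon as they are edges, and two involutions that
differ at every vertex give disjoint matchings. For the involutions of `M_j` and `M_{j'}` this
comes down to `j ≢ j'` and, at `u`, to `2j ≢ 2j'` modulo `k + 1`, which holds because `k + 1` is
odd.
-/

namespace Fin

lemma add_self_injective {n : ℕ} (hn : Odd n) : Function.Injective fun x : Fin n => x + x := by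
  intro a b hab
  have hmod : 2 * a.val ≡ 2 * b.val [MOD n] := by
    rw [two_mul, two_mul]
    exact (Fin.val_add a a).symm.trans ((congrArg Fin.val hab).trans (Fin.val_add b b))
  exact Fin.ext <| (Nat.ModEq.cancel_left_of_coprime (Nat.coprime_two_right.mpr hn) hmod)
    |>.eq_of_lt_of_lt a.isLt b.isLt

open Fin.NatCast in
lemma natCast_inj_of_le {n a b : ℕ} (ha : a ≤ n) (hb : b ≤ n) :
    (a : Fin (n + 1)) = b ↔ a = b := by
  simp only [le_antisymm_iff, Fin.natCast_le_natCast ha hb, Fin.natCast_le_natCast hb ha]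

end Fin

section PartnerEdges

variable {V : Type*} [Fintype V] {p q : V → V}

noncomputable def partnerEdges (p : V → V) : Finset (Sym2 V) :=
  Finset.univ.image fun v => s(v, p v)

lemma mem_partnerEdges {e : Sym2 V} : e ∈ partnerEdges p ↔ ∃ v, s(v, p v) = e := by
  simp [partnerEdges]

lemma mk_mem_partnerEdges (p : V → V) (v : V) : s(v, p v) ∈ partnerEdges p :=
  mem_partnerEdges.mpr ⟨v, rfl⟩

lemma eq_of_mem_partnerEdges (hp : p.Involutive) {e : Sym2 V} (he : e ∈ partnerEdges p) {v : V}
    (hv : v ∈ e) : e = s(v, p v) := by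
  obtain ⟨x, rfl⟩ := mem_partnerEdges.mp he
  rcases Sym2.mem_iff.mp hv with rfl | rfl
  · rfl
  · rw [hp x, Sym2.eq_swap]

lemma isMatchingE_partnerEdges {G : SimpleGraph V} (hp : p.Involutive)
    (hadj : ∀ v, G.Adj v (p v)) : IsMatchingE G (partnerEdges p) := by
  refine ⟨?_, fun e he f hf hef v hve hvf => hef ?_⟩
  · intro e he
    obtain ⟨x, rfl⟩ := mem_partnerEdges.mp he
    exact hadj x
  · rw [eq_of_mem_partnerEdges hp he hve, eq_of_mem_partnerEdges hp hf hvf]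

lemma disjoint_partnerEdges (hp : p.Involutive) (hpq : ∀ v, p v ≠ q v) :
    Disjoint (partnerEdges p) (partnerEdges q) := by
  refine Finset.disjoint_left.mpr fun e hep heq => ?_
  obtain ⟨v, rfl⟩ := mem_partnerEdges.mp heq
  exact hpq v (Sym2.congr_right.mp (eq_of_mem_partnerEdges hp hep (Sym2.mem_mk_left _ _))).symm

end PartnerEdges

section WorstCaseExample

open Fin.NatCast

variable {k : ℕ}

def exPartner (k : ℕ) (J : Fin (k + 1)) : ExV k → ExV k
  | .inl (.inl i) => if i = J then wV k else .inr (.inl (i + J))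
  | .inl (.inr ()) => .inr (.inl (J + J))
  | .inr (.inl m) => if m = J + J then uV k else .inl (.inl (m - J))
  | .inr (.inr ()) => .inl (.inl J)

lemma exPartner_involutive (J : Fin (k + 1)) : (exPartner k J).Involutive := by
  rintro ((i | ⟨⟩) | (m | ⟨⟩))
  · by_cases hi : i = J <;> simp [exPartner, hi, wV]
  · simp [exPartner, uV]
  · by_cases hm : m = J + J <;> simp [exPartner, hm, uV, sub_eq_iff_eq_add]
  · simp [exPartner, wV]

lemma exGraph_adj_exPartner {J : Fin (k + 1)} (hJ : J ≠ 0) (v : ExV k) :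
    (exGraph k).Adj v (exPartner k J v) := by
  rcases v with (i | ⟨⟩) | (m | ⟨⟩)
  · by_cases hi : i = J <;> simp [exPartner, exGraph, exRel, hi, wV, hJ]
  · simp [exPartner, exGraph, exRel]
  · by_cases hm : m = J + J <;> simp [exPartner, exGraph, exRel, hm, uV, hJ]
  · simp [exPartner, exGraph, exRel]

lemma exPartner_ne_exPartner (hk : Odd (k + 1)) {J J' : Fin (k + 1)} (hJ : J ≠ J') (v : ExV k) :
    exPartner k J v ≠ exPartner k J' v := by
  have hJJ : J + J ≠ J' + J' := (Fin.add_self_injective hk).ne hJ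
  rcases v with (i | ⟨⟩) | (m | ⟨⟩)
  · by_cases hi : i = J <;> by_cases hi' : i = J' <;> simp_all [exPartner, wV]
  · simpa [exPartner] using hJJ
  · by_cases hm : m = J + J <;> by_cases hm' : m = J' + J' <;> simp_all [exPartner, uV]
  · simpa [exPartner] using hJ

lemma Mj_eq_partnerEdges (k j : ℕ) : Mj k j = partnerEdges (exPartner k j) := by
  set J : Fin (k + 1) := Nat.cast j
  have hAB (i : Fin (k + 1)) (hi : i ≠ J) : s(.inl (.inl i), .inr (.inl (i + J))) ∈ Mj k j := by
    simp only [Mj, Finset.mem_union, Finset.mem_sdiff, Finset.mem_image, Finset.mem_range,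
      Finset.mem_singleton]
    refine Or.inl ⟨⟨(i - 1).val, (i - 1).isLt, ?_⟩, ?_⟩
    · simp [aV, bV, J]
    · simp [aV, bV, J, hi]
  apply Finset.Subset.antisymm
  · intro e he
    simp only [Mj, Finset.mem_union, Finset.mem_sdiff, Finset.mem_image, Finset.mem_range,
      Finset.mem_insert, Finset.mem_singleton] at he
    rcases he with ⟨⟨i, -, rfl⟩, hne⟩ | rfl | rfl
    · have hi : ((i + 1 : ℕ) : Fin (k + 1)) ≠ J := fun h => hne (by simp [aV, bV, h, J, two_mul])
      push_cast at hi
      convert mk_mem_partnerEdges (exPartner k J) (aV k (i + 1)) using 1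
      simp [aV, bV, exPartner, hi, J]
    · convert mk_mem_partnerEdges (exPartner k J) (aV k j) using 1
      simp [aV, exPartner, J]
    · rw [Sym2.eq_swap]
      convert mk_mem_partnerEdges (exPartner k J) (uV k) using 1
      simp [bV, uV, exPartner, J, two_mul]
  · intro e he
    obtain ⟨v, rfl⟩ := mem_partnerEdges.mp he
    rcases v with (i | ⟨⟩) | (m | ⟨⟩)
    · by_cases hi : i = J
      · simp [Mj, exPartner, hi, aV, J]
      · simpa [exPartner, hi] using hAB i hi
    · simp [Mj, exPartner, uV, bV, two_mul, J]
    · by_cases hm : m = J + J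
      · simp [Mj, exPartner, hm, uV, bV, two_mul, J]
      · rw [Sym2.eq_swap]
        simpa [exPartner, hm] using hAB (m - J) fun h => hm (sub_eq_iff_eq_add.mp h)
    · simp [Mj, exPartner, wV, aV, J]

lemma Mj_isPerfectMatching {j : ℕ} (hj : 1 ≤ j) (hjk : j ≤ k) :
    IsMatchingE (exGraph k) (Mj k j) ∧ ∀ v : ExV k, ∃ e ∈ Mj k j, v ∈ e := by
  have hJ : (j : Fin (k + 1)) ≠ 0 := by
    rw [Ne, Fin.natCast_eq_zero]
    exact Nat.not_dvd_of_pos_of_lt hj (Nat.lt_succ_of_le hjk)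
  rw [Mj_eq_partnerEdges]
  exact ⟨isMatchingE_partnerEdges (exPartner_involutive _) (exGraph_adj_exPartner hJ),
    fun v => ⟨_, mk_mem_partnerEdges _ v, Sym2.mem_mk_left _ _⟩⟩

lemma disjoint_Mj (hk : Odd (k + 1)) {j j' : ℕ} (hj : j ≤ k) (hj' : j' ≤ k) (hne : j ≠ j') :
    Disjoint (Mj k j) (Mj k j') := by
  rw [Mj_eq_partnerEdges, Mj_eq_partnerEdges]
  exact disjoint_partnerEdges (exPartner_involutive _)
    (exPartner_ne_exPartner hk ((Fin.natCast_inj_of_le hj hj').not.mpr hne))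

end WorstCaseExample

theorem stmt17_general (k : ℕ) (hke : Even k) :
    (∀ j, 1 ≤ j → j ≤ k →
      IsMatchingE (exGraph k) (Mj k j) ∧ ∀ v : ExV k, ∃ e ∈ Mj k j, v ∈ e) ∧
    (∀ j j', 1 ≤ j → j ≤ k → 1 ≤ j' → j' ≤ k → j ≠ j' → Disjoint (Mj k j) (Mj k j')) :=
  ⟨fun _ hj hjk => Mj_isPerfectMatching hj hjk,
    fun _ _ _ hjk _ hj'k hne => disjoint_Mj hke.add_one hjk hj'k hne⟩

theorem stmt17 (k : ℕ) (hk : 1 ≤ k) (hke : Even k) :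
    (∀ j, 1 ≤ j → j ≤ k →
      IsMatchingE (exGraph k) (Mj k j) ∧ ∀ v : ExV k, ∃ e ∈ Mj k j, v ∈ e) ∧
    (∀ j j', 1 ≤ j → j ≤ k → 1 ≤ j' → j' ≤ k → j ≠ j' → Disjoint (Mj k j) (Mj k j')) :=
  stmt17_general k hke
end

section
/- The approximation bound 1 + k/(k+2) is tight: for every even k ≥ 2 there exists a bipartite graph G and a valid execution of the iterated matching-removal algorithm (removing k maximum matchings, then taking a maximum independent set of the residual graph) whose output S satisfies |I*_k| / |S| = 2(k+1)/(k+2) = 1 + k/(k+2), where I*_k is a maximum k-dependent set of G. -/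
open scoped Classical

/-!
In round `i` (indices in `ℤ/(k+1)`) remove the perfect matching `u–bᵢ`, `aᵢ–w`,
`aⱼ–b₂ᵢ₋ⱼ` (`j ≠ i`). As `k+1` is odd, `2` is invertible mod `k+1`, so these `k+1` matchings are
pairwise edge-disjoint perfect matchings; hence the first `k` of them are maximum matchings of
the successive residual graphs. What is left is the last one plus the edge `uw`; it still has a
perfect matching, so its independent sets have at most `k+2` vertices, and the side `A ∪ {u}`
is one of them. On the other hand `A ∪ B` is `k`-dependent, while a set missing at most one vertex
contains `u` or `w` together with at least `k+1` of its `k+2` neighbours; so `|I*_k| = 2k+2`.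
-/

open Finset

section

variable {V : Type*} {G : SimpleGraph V} {M : Finset (Sym2 V)}

theorem IsMatchingE.card_biUnion_toFinset (hM : IsMatchingE G M) :
    #(M.biUnion Sym2.toFinset) = 2 * #M := by
  rw [card_biUnion, sum_congr rfl fun e he =>
    Sym2.card_toFinset_of_not_isDiag e (G.not_isDiag_of_mem_edgeSet (hM.1 he)), sum_const,
    smul_eq_mul, mul_comm]
  intro e he f hf hef
  exact disjoint_left.2 fun v hve hvf =>
    hM.2 he hf hef v (Sym2.mem_toFinset.1 hve) (Sym2.mem_toFinset.1 hvf)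

theorem isMatchingE_resid {M : ℕ → Finset (Sym2 V)} {i : ℕ} (hM : IsMatchingE G (M i))
    (hdisj : ∀ j < i, Disjoint (M j) (M i)) : IsMatchingE (resid G M i) (M i) := by
  refine ⟨fun e he => ?_, hM.2⟩
  simp only [resid, SimpleGraph.edgeSet_deleteEdges, Set.mem_sdiff, Set.mem_iUnion,
    Set.mem_Iio, mem_coe, not_exists]
  exact ⟨hM.1 he, fun j hj hej => disjoint_left.1 (hdisj j hj) hej he⟩

theorem IsIndepF.anti {H : SimpleGraph V} {S : Finset V} (hGH : H ≤ G) (hS : IsIndepF G S) :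
    IsIndepF H S :=
  fun v hv w hw hadj => hS v hv w hw (hGH hadj)

variable [Fintype V]

theorem IsMatchingE.two_mul_card_le (hM : IsMatchingE G M) : 2 * #M ≤ Fintype.card V :=
  hM.card_biUnion_toFinset ▸ card_le_univ _

theorem IsMatchingE.isMaxMatchingE (hM : IsMatchingE G M) (hperf : 2 * #M = Fintype.card V) :
    IsMaxMatchingE G M :=
  ⟨hM, fun _ hM' => by have := hM'.two_mul_card_le; omega⟩

theorem IsIndepF.card_le_of_isMatchingE {S : Finset V} (hS : IsIndepF G S)
    (hM : IsMatchingE G M) (hperf : 2 * #M = Fintype.card V) : #S ≤ #M := by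
  have hcover : ∀ v, ∃ e ∈ M, v ∈ e := fun v => by
    simpa using eq_univ_iff_forall.1
      (eq_univ_of_card _ (hM.card_biUnion_toFinset.trans hperf)) v
  have hpair : ∀ e ∈ M, #(S.filter (· ∈ e)) ≤ 1 := by
    intro e he
    refine card_le_one.2 fun v hv w hw => by_contra fun hne => ?_
    rw [mem_filter] at hv hw
    have : e = s(v, w) := (Sym2.mem_and_mem_iff hne).1 ⟨hv.2, hw.2⟩
    exact hS v hv.1 w hw.1 (by simpa [this] using hM.1 he)
  calc #S ≤ #(M.biUnion fun e => S.filter (· ∈ e)) := card_le_card fun v hv => by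
        obtain ⟨e, he, hve⟩ := hcover v
        exact mem_biUnion.2 ⟨e, he, mem_filter.2 ⟨hv, hve⟩⟩
    _ ≤ ∑ e ∈ M, #(S.filter (· ∈ e)) := card_biUnion_le
    _ ≤ ∑ _e ∈ M, 1 := sum_le_sum hpair
    _ = #M := by simp

theorem KDepSet.degree_le {k : ℕ} {T : Finset V} (hT : KDepSet G k T) {v : V} (hv : v ∈ T) :
    G.degree v ≤ k + #Tᶜ := by
  calc G.degree v = #(G.neighborFinset v) := (G.card_neighborFinset_eq_degree v).symm
    _ ≤ #(T.filter (G.Adj v) ∪ Tᶜ) := card_le_card fun w hw => by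
        by_cases hwT : w ∈ T
        · exact mem_union_left _ (mem_filter.2 ⟨hwT, (G.mem_neighborFinset v w).1 hw⟩)
        · exact mem_union_right _ (mem_compl.2 hwT)
    _ ≤ k + #Tᶜ := (card_union_le _ _).trans (Nat.add_le_add_right (hT v hv) _)

theorem KDepSet.card_add_two_le {k : ℕ} {T : Finset V} (hT : KDepSet G k T) {u w : V}
    (huw : u ≠ w) (hu : k + 2 ≤ G.degree u) (hw : k + 2 ≤ G.degree w) :
    #T + 2 ≤ Fintype.card V := by
  by_contra! hT'
  have hcompl : #Tᶜ ≤ 1 := by rw [card_compl]; omega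
  by_cases huT : u ∈ T
  · have := hT.degree_le huT; omega
  by_cases hwT : w ∈ T
  · have := hT.degree_le hwT; omega
  have : #({u, w} : Finset V) ≤ #Tᶜ :=
    card_le_card (by simp [insert_subset_iff, huT, hwT])
  rw [card_pair huw] at this
  omega

end

section GraphMatching

variable {α β : Type*} [Fintype α]

noncomputable def graphMatching (f : α → β) : Finset (Sym2 (α ⊕ β)) :=
  univ.image fun a => s(.inl a, .inr (f a))

theorem mem_graphMatching {f : α → β} {e : Sym2 (α ⊕ β)} :
    e ∈ graphMatching f ↔ ∃ a, s(.inl a, .inr (f a)) = e := by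
  simp [graphMatching]

theorem card_graphMatching (f : α → β) : #(graphMatching f) = Fintype.card α := by
  rw [graphMatching, card_image_of_injective _ fun a b h => (by simpa using h : a = b ∧ _).1,
    card_univ]

theorem isMatchingE_graphMatching {G : SimpleGraph (α ⊕ β)} {f : α → β}
    (hf : Function.Injective f) (hG : ∀ a, G.Adj (.inl a) (.inr (f a))) :
    IsMatchingE G (graphMatching f) := by
  refine ⟨fun e he => ?_, fun e he e' he' hne v hv hv' => ?_⟩
  · obtain ⟨a, rfl⟩ := mem_graphMatching.1 he
    exact hG a
  · obtain ⟨a, rfl⟩ := mem_graphMatching.1 he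
    obtain ⟨b, rfl⟩ := mem_graphMatching.1 he'
    have hab : a ≠ b := by rintro rfl; exact hne rfl
    rw [Sym2.mem_iff] at hv hv'
    rcases hv with rfl | rfl <;> rcases hv' with h | h <;>
      simp only [Sum.inl.injEq, Sum.inr.injEq, reduceCtorEq, hf.eq_iff] at h
    exacts [hab h, hab h]

theorem disjoint_graphMatching {f g : α → β} (h : ∀ a, f a ≠ g a) :
    Disjoint (graphMatching f) (graphMatching g) := by
  refine disjoint_left.2 fun e he he' => ?_
  obtain ⟨a, rfl⟩ := mem_graphMatching.1 he
  obtain ⟨b, hb⟩ := mem_graphMatching.1 he'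
  simp only [Sym2.eq_iff, Sum.inl.injEq, Sum.inr.injEq, reduceCtorEq, and_false,
    or_false] at hb
  exact h a (hb.1 ▸ hb.2).symm

end GraphMatching

theorem two_mul_sub_eq_self_iff {R : Type*} [CommRing R] {i j : R} : 2 * i - j = i ↔ j = i :=
  ⟨fun h => by linear_combination -h, fun h => by linear_combination -h⟩

open Fin.NatCast Fin.CommRing

variable {k : ℕ}

theorem Fin.two_mul_injective_of_even (hk : Even k) :
    Function.Injective fun x : Fin (k+1) => 2 * x := by
  have h2 : IsUnit ((2 : ℕ) : ZMod (k+1)) :=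
    (ZMod.isUnit_iff_coprime 2 (k+1)).2 (Nat.coprime_two_left.2 hk.add_one)
  exact fun x y h => h2.mul_left_cancel h

theorem Fin.natCast_injOn_Iic : Set.InjOn (fun n : ℕ => (n : Fin (k+1))) (Set.Iic k) :=
  fun m hm n hn h => by
    rwa [← Fin.val_cast_of_lt (Nat.lt_succ_of_le hm), ← Fin.val_cast_of_lt (Nat.lt_succ_of_le hn),
      Fin.val_inj]

@[simp] theorem not_exGraph_adj_inl_inl {x y : Fin (k+1) ⊕ Unit} :
    ¬(exGraph k).Adj (.inl x) (.inl y) := by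
  simp [exGraph, exRel]

@[simp] theorem not_exGraph_adj_inr_inr {x y : Fin (k+1) ⊕ Unit} :
    ¬(exGraph k).Adj (.inr x) (.inr y) := by
  simp [exGraph, exRel]

theorem exGraph_adj_inl_inr {x y : Fin (k+1) ⊕ Unit} :
    (exGraph k).Adj (.inl x) (.inr y) ↔ ∀ i j, x = .inl i → y = .inl j → i ≠ j := by
  rcases x with i | ⟨⟩ <;> rcases y with j | ⟨⟩ <;> simp [exGraph, exRel]

theorem exGraph_adj_inr_inl {x y : Fin (k+1) ⊕ Unit} :
    (exGraph k).Adj (.inr y) (.inl x) ↔ ∀ i j, x = .inl i → y = .inl j → i ≠ j :=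
  (exGraph k).adj_comm _ _ |>.trans exGraph_adj_inl_inr

def roundPartner (i : Fin (k+1)) : Fin (k+1) ⊕ Unit → Fin (k+1) ⊕ Unit
  | .inl j => if j = i then .inr () else .inl (2 * i - j)
  | .inr _ => .inl i

@[simp] theorem roundPartner_inr (i : Fin (k+1)) (u : Unit) : roundPartner i (.inr u) = .inl i :=
  rfl

@[simp] theorem roundPartner_inl_self (i : Fin (k+1)) : roundPartner i (.inl i) = .inr () :=
  if_pos rfl

theorem roundPartner_inl_of_ne {i j : Fin (k+1)} (h : j ≠ i) :
    roundPartner i (.inl j) = .inl (2 * i - j) :=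
  if_neg h

theorem roundPartner_involutive (i : Fin (k+1)) : Function.Involutive (roundPartner i) := by
  rintro (j | _)
  · by_cases hj : j = i
    · simp [hj]
    · rw [roundPartner_inl_of_ne hj, roundPartner_inl_of_ne (mt two_mul_sub_eq_self_iff.1 hj),
        sub_sub_cancel]
  · simp

theorem exGraph_adj_roundPartner (hk : Even k) (i : Fin (k+1)) (x : Fin (k+1) ⊕ Unit) :
    (exGraph k).Adj (.inl x) (.inr (roundPartner i x)) := by
  rcases x with j | ⟨⟩
  · by_cases hj : j = i
    · simp [hj, exGraph_adj_inl_inr]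
    · rw [roundPartner_inl_of_ne hj, exGraph_adj_inl_inr]
      rintro _ _ ⟨⟩ ⟨⟩ h
      exact hj (Fin.two_mul_injective_of_even hk (by linear_combination h))
  · simp [exGraph_adj_inl_inr]

theorem roundPartner_ne (hk : Even k) {i i' : Fin (k+1)} (hne : i ≠ i') (x : Fin (k+1) ⊕ Unit) :
    roundPartner i x ≠ roundPartner i' x := by
  rcases x with j | ⟨⟩
  · by_cases hj : j = i
    · subst hj; simp [roundPartner_inl_of_ne hne]
    by_cases hj' : j = i'
    · subst hj'; simp [roundPartner_inl_of_ne hne.symm]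
    rw [roundPartner_inl_of_ne hj, roundPartner_inl_of_ne hj', Ne, Sum.inl.injEq, sub_left_inj]
    exact fun h => hne (Fin.two_mul_injective_of_even hk h)
  · simpa using hne

noncomputable def roundMatching (k n : ℕ) : Finset (Sym2 (ExV k)) :=
  graphMatching (roundPartner (n : Fin (k+1)))

theorem card_roundMatching (n : ℕ) : #(roundMatching k n) = k + 2 := by
  simp [roundMatching, card_graphMatching]

theorem two_mul_card_roundMatching (n : ℕ) : 2 * #(roundMatching k n) = Fintype.card (ExV k) := by
  simp only [card_roundMatching, Fintype.card_sum, Fintype.card_fin, Fintype.card_unit]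
  ring

theorem isMatchingE_resid_roundMatching (hk : Even k) {n : ℕ} (hn : n ≤ k) :
    IsMatchingE (resid (exGraph k) (roundMatching k) n) (roundMatching k n) := by
  refine isMatchingE_resid (isMatchingE_graphMatching (roundPartner_involutive _).injective
    (exGraph_adj_roundPartner hk _)) fun m hm => disjoint_graphMatching (roundPartner_ne hk ?_)
  exact fun h => hm.ne (Fin.natCast_injOn_Iic (Set.mem_Iic.2 (hm.le.trans hn)) hn h)

def leftVerts (k : ℕ) : Finset (ExV k) := univ.map .inl

theorem card_leftVerts : #(leftVerts k) = k + 2 := by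
  simp [leftVerts]

theorem isIndepF_leftVerts : IsIndepF (exGraph k) (leftVerts k) := by
  simp [IsIndepF, leftVerts]

theorem exGraph_colorable : (exGraph k).Colorable 2 :=
  ⟨.mk (Sum.elim (fun _ => 0) fun _ => 1) fun {v w} hadj => by
    rcases v with v | v <;> rcases w with w | w <;> simp_all⟩

theorem le_degree_exGraph_u : k + 2 ≤ (exGraph k).degree (uV k) := by
  rw [← SimpleGraph.card_neighborFinset_eq_degree]
  calc k + 2 = #(univ.map .inr : Finset (ExV k)) := by simp
    _ ≤ _ := card_le_card fun v hv => by
      obtain ⟨y, -, rfl⟩ := mem_map.1 hv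
      exact ((exGraph k).mem_neighborFinset _ _).2 (by simp [uV, exGraph_adj_inl_inr])

theorem le_degree_exGraph_w : k + 2 ≤ (exGraph k).degree (wV k) := by
  rw [← SimpleGraph.card_neighborFinset_eq_degree]
  calc k + 2 = #(univ.map .inl : Finset (ExV k)) := by simp
    _ ≤ _ := card_le_card fun v hv => by
      obtain ⟨x, -, rfl⟩ := mem_map.1 hv
      exact ((exGraph k).mem_neighborFinset _ _).2 (by simp [wV, exGraph_adj_inr_inl])

theorem card_ABset : #(ABset k) = 2 * k + 2 := by
  rw [ABset, card_union_of_disjoint (by simp [disjoint_left]),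
    card_image_of_injective _ fun _ _ h => by simpa using h,
    card_image_of_injective _ fun _ _ h => by simpa using h, card_univ, Fintype.card_fin]
  ring

theorem kDepSet_ABset : KDepSet (exGraph k) k (ABset k) := by
  have hcard (i : Fin (k+1)) (f : Fin (k+1) → ExV k) : #((univ.erase i).image f) ≤ k :=
    card_image_le.trans (by simp)
  intro v hv
  simp only [ABset, mem_union, mem_image, mem_univ, true_and] at hv
  rcases hv with ⟨i, rfl⟩ | ⟨i, rfl⟩
  · refine (congrArg card ?_).trans_le (hcard i fun j => .inr (.inl j))
    ext v; rcases v with (j | ⟨⟩) | (j | ⟨⟩) <;> simp [ABset, exGraph_adj_inl_inr, eq_comm]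
  · refine (congrArg card ?_).trans_le (hcard i fun j => .inl (.inl j))
    ext v; rcases v with (j | ⟨⟩) | (j | ⟨⟩) <;> simp [ABset, exGraph_adj_inr_inl, eq_comm]

theorem stmt19_general (k : ℕ) (hke : Even k) :
    ∃ (M : ℕ → Finset (Sym2 (ExV k))) (S Istar : Finset (ExV k)),
      (exGraph k).Colorable 2 ∧
      (∀ i < k, IsMaxMatchingE (resid (exGraph k) M i) (M i)) ∧
      IsMaxIndepF (resid (exGraph k) M k) S ∧
      KDepSet (exGraph k) k Istar ∧
      (∀ T, KDepSet (exGraph k) k T → T.card ≤ Istar.card) ∧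
      (Istar.card : ℝ) / S.card = 2 * (k+1) / (k+2) ∧
      (2 * (k+1) : ℝ) / (k+2) = 1 + k / (k+2) := by
  refine ⟨roundMatching k, leftVerts k, ABset k, exGraph_colorable, fun i hi => ?_, ⟨?_, ?_⟩,
    kDepSet_ABset, fun T hT => ?_, ?_, ?_⟩
  · exact (isMatchingE_resid_roundMatching hke hi.le).isMaxMatchingE
      (two_mul_card_roundMatching i)
  · exact isIndepF_leftVerts.anti (SimpleGraph.deleteEdges_le _)
  · intro S hS
    rw [card_leftVerts, ← card_roundMatching k]
    exact hS.card_le_of_isMatchingE (isMatchingE_resid_roundMatching hke le_rfl)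
      (two_mul_card_roundMatching k)
  · have := hT.card_add_two_le (by simp [uV, wV]) le_degree_exGraph_u le_degree_exGraph_w
    simp only [Fintype.card_sum, Fintype.card_fin, Fintype.card_unit] at this
    rw [card_ABset]
    omega
  · rw [card_ABset, card_leftVerts]
    push_cast
    ring
  · field_simp
    ring

theorem stmt19 (k : ℕ) (hk : 2 ≤ k) (hke : Even k) :
    ∃ (M : ℕ → Finset (Sym2 (ExV k))) (S Istar : Finset (ExV k)),
      (exGraph k).Colorable 2 ∧
      (∀ i < k, IsMaxMatchingE (resid (exGraph k) M i) (M i)) ∧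
      IsMaxIndepF (resid (exGraph k) M k) S ∧
      KDepSet (exGraph k) k Istar ∧
      (∀ T, KDepSet (exGraph k) k T → T.card ≤ Istar.card) ∧
      (Istar.card : ℝ) / S.card = 2 * (k+1) / (k+2) ∧
      (2 * (k+1) : ℝ) / (k+2) = 1 + k / (k+2) :=
  stmt19_general k hke
end
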